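/- Let M = (m_{k,n})_{k,n∈ℕ} be a Rosenthal matrix such that ‖M‖_∞ ≤ 1 and m_{k,n} = 0 whenever n ≤ k. Then for every positive integer l there is a partition {P_1, …, P_l} of ℕ into l pieces such that M is (1/l)-fragmented by P_i for every 1 ≤ i ≤ l. -/

import Mathlib

/-!
Fix a horizon `N` and colour `N - 1, …, 0` in turn: when `k` is coloured, every `n > k` already
is, and by pigeonhole one of the `l` colour classes carries at most `1 / l` of row `k`; as `M` is
strictly upper triangular, only these entries matter. For each `N` the colourings obeying these
finitely many constraints form a nonempty closed subset of the compact space `(Fin l)^ℕ`,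
decreasing in `N`, so a single colouring obeys all of them; its colour classes are the pieces.
-/

/-- A *Rosenthal matrix* is a matrix `M = (m_{k,n})` of non-negative reals whose rows are
summable and such that `‖M‖_∞ = sup_k Σ_n m_{k,n}` is finite. -/
def IsRosenthalMatrix (M : ℕ → ℕ → ℝ) : Prop :=
  (∀ k n, 0 ≤ M k n) ∧ (∀ k, Summable (M k)) ∧
    BddAbove (Set.range fun k => ∑' n, M k n)

/-- `M` is `ε`-fragmented by `A`: for every `k ∈ A`, `Σ_{n ∈ A \ {k}} m_{k,n} ≤ ε`. -/
def Fragments (M : ℕ → ℕ → ℝ) (ε : ℝ) (A : Set ℕ) : Prop :=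
  ∀ k ∈ A, ∑' n : (A \ {k} : Set ℕ), M k ↑n ≤ ε


/-- `‖M‖_∞`, the supremum of the row sums of `M`. -/
noncomputable def rosNorm (M : ℕ → ℕ → ℝ) : ℝ := ⨆ k, ∑' n, M k n

open Finset

section Coloring

variable {ι : Type*} [DecidableEq ι]

def laterSameColorSum (M : ℕ → ℕ → ℝ) (c : ℕ → ι) (N k : ℕ) : ℝ :=
  ∑ n ∈ range N with k < n ∧ c n = c k, M k n

theorem laterSameColorSum_congr (M : ℕ → ℕ → ℝ) {c c' : ℕ → ι} (N : ℕ) {k : ℕ}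
    (h : ∀ n, k ≤ n → c n = c' n) :
    laterSameColorSum M c N k = laterSameColorSum M c' N k := by
  unfold laterSameColorSum
  refine sum_congr (filter_congr fun n _ => ?_) fun _ _ => rfl
  constructor <;> rintro ⟨hkn, hn⟩ <;> refine ⟨hkn, ?_⟩
  · rwa [← h n hkn.le, ← h k le_rfl]
  · rwa [h n hkn.le, h k le_rfl]

theorem laterSameColorSum_mono {M : ℕ → ℕ → ℝ} (c : ℕ → ι) {k : ℕ} (hM : ∀ n, 0 ≤ M k n)
    {N N' : ℕ} (hN : N ≤ N') :
    laterSameColorSum M c N k ≤ laterSameColorSum M c N' k :=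
  sum_le_sum_of_subset_of_nonneg (filter_subset_filter _ (range_subset_range.mpr hN))
    fun n _ _ => hM n

theorem continuous_laterSameColorSum [TopologicalSpace ι] [DiscreteTopology ι]
    (M : ℕ → ℕ → ℝ) (N k : ℕ) :
    Continuous fun c : ℕ → ι => laterSameColorSum M c N k := by
  simp only [laterSameColorSum, sum_filter]
  refine continuous_finsetSum _ fun n _ => ?_
  have hpair : Continuous fun c : ℕ → ι => (c n, c k) :=
    (continuous_apply n).prodMk (continuous_apply k)
  exact continuous_of_discreteTopology.comp hpair
    (g := fun p => if k < n ∧ p.1 = p.2 then M k n else 0)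

theorem exists_laterSameColorSum_le_average [Fintype ι] [Nonempty ι] (M : ℕ → ℕ → ℝ) (N : ℕ) :
    ∃ c : ℕ → ι, ∀ k,
      laterSameColorSum M c N k ≤ (∑ n ∈ range N with k < n, M k n) / Fintype.card ι := by
  suffices ∀ j ≤ N, ∃ c : ℕ → ι, ∀ k, j ≤ k →
      laterSameColorSum M c N k ≤ (∑ n ∈ range N with k < n, M k n) / Fintype.card ι by
    simpa using this 0 N.zero_le
  intro j hj
  induction hj using Nat.decreasingInduction with
  | self =>
    refine ⟨fun _ => Classical.arbitrary ι, fun k hk => ?_⟩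
    have : (range N).filter (fun n => k < n) = ∅ :=
      filter_false_of_mem fun n hn => by rw [mem_range] at hn; omega
    simp [laterSameColorSum, this]
  | of_succ j _ ih =>
    obtain ⟨c, hc⟩ := ih
    obtain ⟨i, -, hi⟩ := exists_sum_fiber_le_of_maps_to_of_sum_le_nsmul (f := c) (w := M j)
      (s := (range N).filter (j < ·)) (t := univ) (fun _ _ => mem_univ _) univ_nonempty
      (b := (∑ n ∈ range N with j < n, M j n) / Fintype.card ι) (by
        rw [card_univ, nsmul_eq_mul, mul_div_cancel₀ _ (by positivity)])
    refine ⟨Function.update c j i, fun k hk => ?_⟩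
    rcases hk.eq_or_lt with rfl | hjk
    · refine le_of_eq_of_le (sum_congr ?_ fun _ _ => rfl) hi
      rw [filter_filter]
      refine filter_congr fun n _ => and_congr_right fun hkn => ?_
      rw [Function.update_self, Function.update_of_ne hkn.ne']
    · rw [laterSameColorSum_congr M N fun n hn => Function.update_of_ne (by omega) i c]
      exact hc k hjk

theorem exists_forall_laterSameColorSum_le [Finite ι] {M : ℕ → ℕ → ℝ} (hM : ∀ k n, 0 ≤ M k n)
    (b : ℕ → ℝ) (h : ∀ N, ∃ c : ℕ → ι, ∀ k, laterSameColorSum M c N k ≤ b k) :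
    ∃ c : ℕ → ι, ∀ N k, laterSameColorSum M c N k ≤ b k := by
  let _ : TopologicalSpace ι := ⊥
  have : DiscreteTopology ι := ⟨rfl⟩
  let good (N : ℕ) : Set (ℕ → ι) := {c | ∀ k, laterSameColorSum M c N k ≤ b k}
  have hclosed (N : ℕ) : IsClosed (good N) := by
    simp only [good, Set.ofPred_forall]
    exact isClosed_iInter fun k =>
      isClosed_le (continuous_laterSameColorSum M N k) continuous_const
  obtain ⟨c, hc⟩ := IsCompact.nonempty_iInter_of_sequence_nonempty_isCompact_isClosed good
    (fun N c hc k => (laterSameColorSum_mono c (hM k) N.le_succ).trans (hc k)) h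
    (hclosed 0).isCompact hclosed
  exact ⟨c, Set.mem_iInter.mp hc⟩

theorem fragments_preimage_singleton {M : ℕ → ℕ → ℝ} {ε : ℝ} {c : ℕ → ι}
    (hM : ∀ k n, 0 ≤ M k n) (htriang : ∀ k n, n ≤ k → M k n = 0)
    (hc : ∀ N k, laterSameColorSum M c N k ≤ ε) (i : ι) : Fragments M ε (c ⁻¹' {i}) := by
  intro k (hk : c k = i)
  rw [_root_.tsum_subtype]
  refine Real.tsum_le_of_sum_range_le (Set.indicator_nonneg fun n _ => hM k n) fun N => ?_
  refine le_trans (sum_le_sum fun n _ => ?_) ((sum_filter _ _).symm.trans_le (hc N k))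
  have hnonneg : 0 ≤ if k < n ∧ c n = c k then M k n else 0 := by
    split_ifs
    exacts [hM k n, le_rfl]
  refine Set.indicator_apply_le' (fun hn => ?_) fun _ => hnonneg
  rcases lt_or_ge k n with hkn | hnk
  · rw [if_pos ⟨hkn, hk ▸ hn.1⟩]
  · exact (htriang k n hnk).trans_le hnonneg

end Coloring

theorem IsRosenthalMatrix.sum_le_rosNorm {M : ℕ → ℕ → ℝ} (hM : IsRosenthalMatrix M) (k : ℕ)
    (s : Finset ℕ) : ∑ n ∈ s, M k n ≤ rosNorm M :=
  (Summable.sum_le_tsum s (fun n _ => hM.1 k n) (hM.2.1 k)).trans (le_ciSup hM.2.2 k)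

/-- Lemma: if `M` is a Rosenthal matrix with `‖M‖_∞ ≤ 1` which is upper triangular
(`m_{k,n} = 0` whenever `n ≤ k`), then for every positive `l` there is a partition of `ℕ`
into `l` pieces each of which `(1/l)`-fragments `M`. -/
theorem triangular_paving_above_diagonal (M : ℕ → ℕ → ℝ) (hM : IsRosenthalMatrix M)
    (hnorm : rosNorm M ≤ 1) (htriang : ∀ k n, n ≤ k → M k n = 0)
    (l : ℕ) (hl : 0 < l) :
    ∃ P : Fin l → Set ℕ, (⋃ i, P i) = Set.univ ∧ Pairwise (Function.onFun Disjoint P) ∧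
      ∀ i, Fragments M (1 / l) (P i) := by
  have : Nonempty (Fin l) := ⟨⟨0, hl⟩⟩
  obtain ⟨c, hc⟩ := exists_forall_laterSameColorSum_le (ι := Fin l) hM.1 (fun _ => 1 / l)
    fun N => by
      obtain ⟨c, hc⟩ := exists_laterSameColorSum_le_average (ι := Fin l) M N
      refine ⟨c, fun k => (hc k).trans ?_⟩
      rw [Fintype.card_fin]
      exact div_le_div_of_nonneg_right ((hM.sum_le_rosNorm k _).trans hnorm) l.cast_nonneg
  refine ⟨fun i => c ⁻¹' {i}, Set.iUnion_eq_univ_iff.mpr fun n => ⟨c n, rfl⟩,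
    pairwise_disjoint_fiber c, fragments_preimage_singleton hM.1 htriang hc⟩
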